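/- The DT property implies the RGP property. -/
import Mathlib


def DT {α : Type*} [DecidableEq α] (v : Finset α → ℝ) : Prop :=
  ∀ S T : Finset α, Disjoint T S → 3 ≤ T.card → ∀ x ∈ T,
    ∃ y ∈ T, y ≠ x ∧
      v (insert x S) + v (S ∪ T.erase x) ≤ v (insert y S) + v (S ∪ T.erase y)

def RGP {α : Type*} [DecidableEq α] (v : Finset α → ℝ) : Prop :=
  ∀ S : Finset α, ∀ x y z : α, x ∉ S → y ∉ S → z ∉ S →
    x ≠ y → x ≠ z → y ≠ z →
    v (insert x (insert y S)) + v (insert z S) ≤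
      max (v (insert x (insert z S)) + v (insert y S))
          (v (insert y (insert z S)) + v (insert x S))

/-- The DT property implies the RGP property. -/
theorem dt_implies_rgp {α : Type*} [DecidableEq α]
    (v : Finset α → ℝ) (hv : DT v) : RGP v := by
  intro S x y z hx hy hz hxy hxz hyz
  obtain ⟨w, hwT, hwz, hle⟩ := hv S {x, y, z}
    (Finset.disjoint_left.2 (by intro a ha; simp at ha; rcases ha with h|h|h <;> subst h <;> assumption))
    (by rw [Finset.card_insert_of_notMem (by simp [hxy, hxz]),
          Finset.card_insert_of_notMem (by simp [hyz]), Finset.card_singleton])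
    z (by simp)
  have hez : S ∪ ({x, y, z} : Finset α).erase z = insert x (insert y S) := by
    ext a; by_cases hax : a = x <;> by_cases hay : a = y <;> by_cases haz : a = z <;>
        simp_all
  rw [hez] at hle
  simp at hwT
  rcases hwT with rfl | rfl | rfl
  · have hex : S ∪ ({w, y, z} : Finset α).erase w = insert y (insert z S) := by
      ext a; by_cases hax : a = w <;> by_cases hay : a = y <;> by_cases haz : a = z <;>
        simp_all
    rw [hex] at hle
    exact le_max_of_le_right (by linarith)
  · have hey : S ∪ ({x, w, z} : Finset α).erase w = insert x (insert z S) := by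
      ext a; by_cases hax : a = x <;> by_cases hay : a = w <;> by_cases haz : a = z <;>
        simp_all
    rw [hey] at hle
    exact le_max_of_le_left (by linarith)
  · exact absurd rfl hwz
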